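/- Let ξ and η be positive irrational real numbers and m a positive natural number with ξ·η = m. Suppose the indices (n, k) with n ≥ 1 and k ≥ 1 are connected, and set r = p_{n−1}/Q_{k−1}, s = P_{k−1}/q_{n−1} (natural numbers with r·s = m). Then r·ξ_n − s·η_k is an integer t satisfying −r + 1 ≤ t ≤ s − 1. -/

import Mathlib

/-!
Write `p, p', q, q'` for `p_{n-1}, p_{n-2}, q_{n-1}, q_{n-2}` and `P, P', Q, Q'` for the
analogous data of `η`. Coprimality of `p, q` and of `P, Q` turns `p P = m q Q` into `p = r Q`,
`P = s q`, `m = r s`. The errors `q ξ - p` and `Q η - P` have signs `(-1)^n` and `(-1)^k`, while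
`ξ η = m` gives `ξ (Q η - P) = -s (q ξ - p)`; hence `n + k` is odd. The determinant identities then
make `(P' - r q', m Q' - r p')` a multiple `t (q, p)`, and substituting
`ξ = (p ξ_n + p') / (q ξ_n + q')` and `η = m / ξ` gives `r ξ_n - s η_k = t`. Finally
`(t + r) p = m Q' + r (p - p') > 0`, i.e. `t > -r`; exchanging the roles of `ξ` and `η` replaces
`t` by `-t` and yields `t < s`.
-/

/-- Complete quotients: `cq ξ 0 = ξ`, `cq ξ (n+1) = 1/(cq ξ n - ⌊cq ξ n⌋)`. -/
noncomputable def cq (ξ : ℝ) : ℕ → ℝ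
  | 0 => ξ
  | n + 1 => 1 / (cq ξ n - ⌊cq ξ n⌋)

/-- Partial quotients: `pquot ξ n = b_n = ⌊ξ_n⌋`. -/
noncomputable def pquot (ξ : ℝ) (n : ℕ) : ℤ := ⌊cq ξ n⌋

/-- Convergent numerators, shifted by one: `cnum ξ 0 = p_{-1} = 1`,
`cnum ξ 1 = p_0 = b_0`, and `cnum ξ (n+1) = p_n = b_n p_{n-1} + p_{n-2}`. -/
noncomputable def cnum (ξ : ℝ) : ℕ → ℤ
  | 0 => 1
  | 1 => pquot ξ 0
  | n + 2 => pquot ξ (n + 1) * cnum ξ (n + 1) + cnum ξ n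

/-- Convergent denominators, shifted by one: `cden ξ 0 = q_{-1} = 0`,
`cden ξ 1 = q_0 = 1`, and `cden ξ (n+1) = q_n = b_n q_{n-1} + q_{n-2}`. -/
noncomputable def cden (ξ : ℝ) : ℕ → ℤ
  | 0 => 0
  | 1 => 1
  | n + 2 => pquot ξ (n + 1) * cden ξ (n + 1) + cden ξ n

lemma cq_succ (ξ : ℝ) (n : ℕ) : cq ξ (n + 1) = (Int.fract (cq ξ n))⁻¹ := by
  rw [cq, one_div, Int.self_sub_floor]

lemma irrational_cq {ξ : ℝ} (hξ : Irrational ξ) : ∀ n, Irrational (cq ξ n)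
  | 0 => hξ
  | n + 1 => by
    rw [cq_succ, ← Int.self_sub_floor]
    exact ((irrational_cq hξ n).sub_intCast _).inv

lemma fract_cq_pos {ξ : ℝ} (hξ : Irrational ξ) (n : ℕ) : 0 < Int.fract (cq ξ n) :=
  Int.fract_pos.2 fun h => irrational_cq hξ n ⟨_, h.symm⟩

lemma one_lt_cq_succ {ξ : ℝ} (hξ : Irrational ξ) (n : ℕ) : 1 < cq ξ (n + 1) := by
  rw [cq_succ]
  exact one_lt_inv₀ (fract_cq_pos hξ n) |>.2 (Int.fract_lt_one _)

lemma one_le_pquot_succ {ξ : ℝ} (hξ : Irrational ξ) (n : ℕ) : 1 ≤ pquot ξ (n + 1) :=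
  Int.le_floor.2 (by exact_mod_cast (one_lt_cq_succ hξ n).le)

section Convergents

variable {ξ : ℝ}

lemma cden_nonneg (hξ : Irrational ξ) : ∀ n, 0 ≤ cden ξ n
  | 0 => le_rfl
  | 1 => zero_le_one
  | n + 2 => by
    have := one_le_pquot_succ hξ n
    have := cden_nonneg hξ (n + 1)
    have := cden_nonneg hξ n
    rw [cden]
    positivity

lemma one_le_cden_succ (hξ : Irrational ξ) : ∀ n, 1 ≤ cden ξ (n + 1)
  | 0 => le_rfl
  | n + 1 => by
    have := one_le_pquot_succ hξ n
    have := one_le_cden_succ hξ n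
    have := cden_nonneg hξ n
    rw [cden]
    nlinarith

lemma cnum_nonneg (hξ : 0 < ξ) (hξirr : Irrational ξ) : ∀ n, 0 ≤ cnum ξ n
  | 0 => zero_le_one
  | 1 => Int.floor_nonneg.2 hξ.le
  | n + 2 => by
    have := one_le_pquot_succ hξirr n
    have := cnum_nonneg hξ hξirr (n + 1)
    have := cnum_nonneg hξ hξirr n
    rw [cnum]
    positivity

lemma cnum_add_cnum_le (hξ : 0 < ξ) (hξirr : Irrational ξ) (n : ℕ) :
    cnum ξ (n + 1) + cnum ξ n ≤ cnum ξ (n + 2) := by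
  have := one_le_pquot_succ hξirr n
  have := cnum_nonneg hξ hξirr (n + 1)
  rw [cnum]
  nlinarith

lemma one_le_cnum (hξ : 0 < ξ) (hξirr : Irrational ξ) : ∀ n, n ≠ 1 → 1 ≤ cnum ξ n
  | 0, _ => le_rfl
  | 1, h => absurd rfl h
  | n + 2, _ => by
    have := cnum_add_cnum_le hξ hξirr n
    rcases eq_or_ne n 1 with rfl | hn
    · linarith [one_le_cnum hξ hξirr 2 (by decide), cnum_nonneg hξ hξirr 1]
    · linarith [one_le_cnum hξ hξirr n hn, cnum_nonneg hξ hξirr (n + 1)]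

lemma cnum_mul_cden_sub_cnum_mul_cden (ξ : ℝ) : ∀ n,
    cnum ξ (n + 1) * cden ξ n - cnum ξ n * cden ξ (n + 1) = (-1) ^ (n + 1)
  | 0 => by simp [cnum, cden]
  | n + 1 => by
    rw [cnum, cden, pow_succ]
    linear_combination -cnum_mul_cden_sub_cnum_mul_cden ξ n

lemma isCoprime_cnum_cden (ξ : ℝ) : ∀ n, IsCoprime (cnum ξ n) (cden ξ n)
  | 0 => isCoprime_one_left
  | n + 1 => by
    have hsq : ((-1 : ℤ) ^ (n + 1)) ^ 2 = 1 := by rw [← pow_mul, pow_mul']; simp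
    exact ⟨(-1) ^ (n + 1) * cden ξ n, -((-1) ^ (n + 1) * cnum ξ n),
      by linear_combination (-1 : ℤ) ^ (n + 1) * cnum_mul_cden_sub_cnum_mul_cden ξ n + hsq⟩

end Convergents

noncomputable def approxErr (ξ : ℝ) (n : ℕ) : ℝ := cden ξ n * ξ - cnum ξ n

lemma approxErr_add_two (ξ : ℝ) (n : ℕ) :
    approxErr ξ (n + 2) = pquot ξ (n + 1) * approxErr ξ (n + 1) + approxErr ξ n := by
  simp only [approxErr, cnum, cden]
  push_cast
  ring

/-- The identity `ξ = (p_n ξ_{n+1} + p_{n-1}) / (q_n ξ_{n+1} + q_{n-1})`, cleared of denominators. -/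
lemma approxErr_succ_mul_cq_succ_add {ξ : ℝ} (hξ : Irrational ξ) :
    ∀ n, approxErr ξ (n + 1) * cq ξ (n + 1) + approxErr ξ n = 0
  | 0 => by
    have hf : Int.fract ξ ≠ 0 := (fract_cq_pos hξ 0).ne'
    rw [cq_succ]
    simp only [approxErr, cnum, cden, pquot, cq]
    push_cast
    rw [one_mul, Int.self_sub_floor, mul_inv_cancel₀ hf]
    ring
  | n + 1 => by
    have hf := (fract_cq_pos hξ (n + 1)).ne'
    have ih := approxErr_succ_mul_cq_succ_add hξ n
    rw [approxErr_add_two, cq_succ, pquot]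
    rw [← Int.self_sub_floor] at hf ⊢
    field_simp
    linear_combination ih

lemma neg_one_pow_mul_approxErr_pos {ξ : ℝ} (hξ : Irrational ξ) :
    ∀ n, 0 < (-1) ^ (n + 1) * approxErr ξ n
  | 0 => by simp [approxErr, cnum, cden]
  | n + 1 => by
    have ih := neg_one_pow_mul_approxErr_pos hξ n
    have hrec := approxErr_succ_mul_cq_succ_add hξ n
    have hcq := one_lt_cq_succ hξ n
    have key : ((-1) ^ (n + 1) * approxErr ξ (n + 1)) * cq ξ (n + 1)
        = -((-1) ^ (n + 1) * approxErr ξ n) := by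
      linear_combination (-1 : ℝ) ^ (n + 1) * hrec
    have : (-1) ^ (n + 1) * approxErr ξ (n + 1) < 0 := by nlinarith
    rw [pow_succ]
    linarith

def Connected (ξ η : ℝ) (m n k : ℕ) : Prop :=
  cnum ξ n * cnum η k = (m : ℤ) * cden ξ n * cden η k

section Connected

variable {ξ η : ℝ} {m n k : ℕ} {r s t : ℤ}

lemma Connected.symm (h : Connected ξ η m n k) : Connected η ξ m k n := by
  unfold Connected at *
  linear_combination h

lemma Connected.cden_dvd_cnum (h : Connected ξ η m n k) : cden η k ∣ cnum ξ n :=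
  (isCoprime_cnum_cden η k).symm.dvd_of_dvd_mul_right ⟨m * cden ξ n, by rw [h]; ring⟩

lemma Connected.natCast_eq_mul (h : Connected ξ η m n k) (hr : cnum ξ n = r * cden η k)
    (hs : cnum η k = s * cden ξ n) (hq : cden ξ n ≠ 0) (hQ : cden η k ≠ 0) :
    (m : ℤ) = r * s :=
  mul_right_cancel₀ (mul_ne_zero hq hQ) (by
    unfold Connected at h
    linear_combination -h + cnum η k * hr + r * cden η k * hs)

lemma mul_approxErr_eq (hmul : ξ * η = m) (hr : cnum ξ n = r * cden η k)
    (hs : cnum η k = s * cden ξ n) (hm : (m : ℤ) = r * s) :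
    ξ * approxErr η k = -(s * approxErr ξ n) := by
  have hr' : (cnum ξ n : ℝ) = r * cden η k := by exact_mod_cast hr
  have hs' : (cnum η k : ℝ) = s * cden ξ n := by exact_mod_cast hs
  have hm' : (m : ℝ) = r * s := by exact_mod_cast hm
  unfold approxErr
  linear_combination (cden η k : ℝ) * hmul - ξ * hs' - (s : ℝ) * hr' + (cden η k : ℝ) * hm'

lemma neg_one_pow_add_neg_one_pow_eq_zero_of_mul_approxErr_eq (hξ : 0 < ξ) (hξirr : Irrational ξ)
    (hηirr : Irrational η) (hs : 0 < s) (h : ξ * approxErr η k = -(s * approxErr ξ n)) :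
    (-1 : ℤ) ^ n + (-1) ^ k = 0 := by
  have ha := neg_one_pow_mul_approxErr_pos hξirr n
  have hb := neg_one_pow_mul_approxErr_pos hηirr k
  have hs' : (0 : ℝ) < s := by exact_mod_cast hs
  rw [pow_succ] at ha hb
  have : (-1 : ℝ) ^ n + (-1) ^ k = 0 := by
    rcases neg_one_pow_eq_or ℝ n with hn | hn <;> rcases neg_one_pow_eq_or ℝ k with hk | hk <;>
      rw [hn] at ha <;> rw [hk] at hb <;> rw [hn, hk] <;> nlinarith
  exact_mod_cast this

lemma exists_int_eq_mul_cq_sub_mul_cq (hξ : Irrational ξ) (hη : Irrational η)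
    (hmul : ξ * η = m) (hr : cnum ξ (n + 1) = r * cden η (k + 1))
    (hs : cnum η (k + 1) = s * cden ξ (n + 1)) (hm : (m : ℤ) = r * s)
    (hpar : (-1 : ℤ) ^ (n + 1) + (-1) ^ (k + 1) = 0) :
    ∃ t : ℤ, r * cq ξ (n + 1) - s * cq η (k + 1) = t ∧
      t * cnum ξ (n + 1) = m * cden η k - r * cnum ξ n := by
  have hprop : (cnum η k - r * cden ξ n) * cnum ξ (n + 1)
      = cden ξ (n + 1) * (m * cden η k - r * cnum ξ n) := by
    linear_combination cnum η k * hr + r * cden η k * hs - cden η k * cden ξ (n + 1) * hm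
      - r * cnum_mul_cden_sub_cnum_mul_cden η k - r * cnum_mul_cden_sub_cnum_mul_cden ξ n - r * hpar
  obtain ⟨t, ht⟩ : cden ξ (n + 1) ∣ cnum η k - r * cden ξ n :=
    (isCoprime_cnum_cden ξ (n + 1)).symm.dvd_of_dvd_mul_right ⟨_, hprop⟩
  have htp : t * cnum ξ (n + 1) = m * cden η k - r * cnum ξ n := by
    refine mul_left_cancel₀ (one_pos.trans_le (one_le_cden_succ hξ n)).ne' ?_
    linear_combination hprop - cnum ξ (n + 1) * ht
  refine ⟨t, ?_, htp⟩
  have hβ : approxErr ξ (n + 1) ≠ 0 := fun h0 => by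
    simpa [h0] using neg_one_pow_mul_approxErr_pos hξ (n + 1)
  have ht' : (cnum η k : ℝ) - r * cden ξ n = cden ξ (n + 1) * t := by exact_mod_cast ht
  have htp' : (t : ℝ) * cnum ξ (n + 1) = m * cden η k - r * cnum ξ n := by exact_mod_cast htp
  have hξrec := approxErr_succ_mul_cq_succ_add hξ n
  have hηrec := approxErr_succ_mul_cq_succ_add hη k
  have hcross := mul_approxErr_eq hmul hr hs hm
  refine mul_left_cancel₀ hβ ?_
  unfold approxErr at hξrec hηrec hcross ⊢
  linear_combination (r : ℝ) * hξrec + ξ * hηrec - cq η (k + 1) * hcross + ξ * ht' + htp'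
    - (cden η k : ℝ) * hmul

lemma neg_lt_of_mul_cnum_eq (hξ : 0 < ξ) (hξirr : Irrational ξ) (hηirr : Irrational η)
    (hm : 0 < m) (hr : 0 < r) (hp : 0 < cnum ξ (n + 1))
    (hpar : (-1 : ℤ) ^ (n + 1) + (-1) ^ (k + 1) = 0)
    (ht : t * cnum ξ (n + 1) = m * cden η k - r * cnum ξ n) : -r < t := by
  suffices 0 < m * cden η k + r * (cnum ξ (n + 1) - cnum ξ n) by nlinarith
  rcases k with _ | k
  · have hn : Even (n + 1) := (neg_one_pow_eq_one_iff_even (R := ℤ) (by decide)).1 (by linear_combination hpar)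
    obtain ⟨j, rfl⟩ : ∃ j, n = j + 1 := ⟨n - 1, by grind⟩
    have := cnum_add_cnum_le hξ hξirr j
    have := one_le_cnum hξ hξirr j (by rintro rfl; exact (by decide : ¬Even 3) hn)
    simp only [cden]
    nlinarith
  · have hQ := one_le_cden_succ hηirr k
    have hle : cnum ξ n ≤ cnum ξ (n + 1) := by
      rcases n with _ | n
      · simp only [cnum] at hp ⊢
        omega
      · linarith [cnum_add_cnum_le hξ hξirr n, cnum_nonneg hξ hξirr n]
    have : (0 : ℤ) < m := by exact_mod_cast hm
    nlinarith

end Connected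

/-- For a connected pair `(n,k)`, the quantity `r·ξ_n - s·η_k` is an integer
`t` with `-r + 1 ≤ t ≤ s - 1`. -/
theorem connected_complete_quotients_integer
    (ξ η : ℝ) (m : ℕ) (hξpos : 0 < ξ) (hηpos : 0 < η)
    (hξirr : Irrational ξ) (hηirr : Irrational η) (hm : 0 < m)
    (hmul : ξ * η = m) (n k : ℕ) (hn : 1 ≤ n) (hk : 1 ≤ k)
    (hconn : cnum ξ n * cnum η k = (m : ℤ) * cden ξ n * cden η k) :
    ∃ t : ℤ,
      ((cnum ξ n / cden η k : ℤ) : ℝ) * cq ξ n -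
        ((cnum η k / cden ξ n : ℤ) : ℝ) * cq η k = (t : ℝ) ∧
      -(cnum ξ n / cden η k) + 1 ≤ t ∧ t ≤ (cnum η k / cden ξ n) - 1 := by
  obtain ⟨n, rfl⟩ := Nat.exists_eq_add_of_le' hn
  obtain ⟨k, rfl⟩ := Nat.exists_eq_add_of_le' hk
  have hconn : Connected ξ η m (n + 1) (k + 1) := hconn
  set r := cnum ξ (n + 1) / cden η (k + 1)
  set s := cnum η (k + 1) / cden ξ (n + 1)
  have hq := one_le_cden_succ hξirr n
  have hQ := one_le_cden_succ hηirr k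
  have hr : cnum ξ (n + 1) = r * cden η (k + 1) := (Int.ediv_mul_cancel hconn.cden_dvd_cnum).symm
  have hs : cnum η (k + 1) = s * cden ξ (n + 1) :=
    (Int.ediv_mul_cancel hconn.symm.cden_dvd_cnum).symm
  have hrs : (m : ℤ) = r * s := hconn.natCast_eq_mul hr hs (by omega) (by omega)
  have hr0 : 0 ≤ r := Int.ediv_nonneg (cnum_nonneg hξpos hξirr _) (by omega)
  have hs0 : 0 ≤ s := Int.ediv_nonneg (cnum_nonneg hηpos hηirr _) (by omega)
  have hmz : (0 : ℤ) < m := by exact_mod_cast hm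
  obtain ⟨hrpos, hspos⟩ : 0 < r ∧ 0 < s := ⟨by nlinarith, by nlinarith⟩
  have hpar := neg_one_pow_add_neg_one_pow_eq_zero_of_mul_approxErr_eq hξpos hξirr hηirr hspos
    (mul_approxErr_eq hmul hr hs hrs)
  obtain ⟨t, ht, htp⟩ := exists_int_eq_mul_cq_sub_mul_cq hξirr hηirr hmul hr hs hrs hpar
  obtain ⟨t', ht', htp'⟩ := exists_int_eq_mul_cq_sub_mul_cq hηirr hξirr (by rw [mul_comm, hmul])
    hs hr (by rw [hrs, mul_comm]) (by rw [add_comm, hpar])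
  have htt' : t' = -t := by exact_mod_cast (by linarith : (t' : ℝ) = -t)
  refine ⟨t, ht, ?_, ?_⟩
  · linarith [neg_lt_of_mul_cnum_eq hξpos hξirr hηirr hm hrpos (by nlinarith) hpar htp]
  · linarith [neg_lt_of_mul_cnum_eq hηpos hηirr hξirr hm hspos (by nlinarith)
      (by rw [add_comm, hpar]) htp']
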